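/- Suppose u, φ, w : [0,l] × [0,∞) → ℝ are smooth solutions of the system ρu_tt = μu_xx + bφ_x, -Ju_ttx - δφ_xx + bu_x + ξφ + dw_x = 0, αw_t - κw_xx + dφ_tx + kw = 0 with Dirichlet boundary conditions u = φ = w = 0 at x = 0, l. Then the energy E(t) = ½(ρ‖u_t‖² + μ‖u_x‖² + δ‖φ_x‖² + ξ‖φ‖² + (Jρ/b)‖u_tt‖² + (Jμ/b)‖u_xt‖² + α‖w‖² + 2b⟨u_x,φ⟩) satisfies dE/dt = -κ‖w_x‖² - k‖w‖². In particular E is nonincreasing. -/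

import Mathlib

open intervalIntegral

/-- Partial derivative in the spatial variable. -/
noncomputable def pdx (f : ℝ → ℝ → ℝ) : ℝ → ℝ → ℝ := fun x t => deriv (fun y => f y t) x

/-- Partial derivative in the time variable. -/
noncomputable def pdt (f : ℝ → ℝ → ℝ) : ℝ → ℝ → ℝ := fun x t => deriv (fun s => f x s) t

section Helpers

variable {f g : ℝ → ℝ → ℝ}

lemma hasDerivAt_fst (hf : ContDiff ℝ (⊤ : ℕ∞) (Function.uncurry f)) (x t : ℝ) :
    HasDerivAt (fun y => f y t) ((fderiv ℝ (Function.uncurry f) (x, t)) (1, 0)) x := by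
  have h2 : HasDerivAt (fun y : ℝ => ((y, t) : ℝ × ℝ)) (1, 0) x :=
    (hasDerivAt_id x).prodMk (hasDerivAt_const x t)
  exact ((hf.differentiable (by simp) (x, t)).hasFDerivAt).comp_hasDerivAt x h2

lemma hasDerivAt_snd (hf : ContDiff ℝ (⊤ : ℕ∞) (Function.uncurry f)) (x t : ℝ) :
    HasDerivAt (fun s => f x s) ((fderiv ℝ (Function.uncurry f) (x, t)) (0, 1)) t := by
  have h2 : HasDerivAt (fun s : ℝ => ((x, s) : ℝ × ℝ)) (0, 1) t :=
    (hasDerivAt_const t x).prodMk (hasDerivAt_id t)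
  exact ((hf.differentiable (by simp) (x, t)).hasFDerivAt).comp_hasDerivAt t h2

lemma pdx_eq (hf : ContDiff ℝ (⊤ : ℕ∞) (Function.uncurry f)) (x t : ℝ) :
    pdx f x t = (fderiv ℝ (Function.uncurry f) (x, t)) (1, 0) := (hasDerivAt_fst hf x t).deriv

lemma pdt_eq (hf : ContDiff ℝ (⊤ : ℕ∞) (Function.uncurry f)) (x t : ℝ) :
    pdt f x t = (fderiv ℝ (Function.uncurry f) (x, t)) (0, 1) := (hasDerivAt_snd hf x t).deriv

lemma hasDerivAt_pdx (hf : ContDiff ℝ (⊤ : ℕ∞) (Function.uncurry f)) (x t : ℝ) :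
    HasDerivAt (fun y => f y t) (pdx f x t) x := by
  have h := hasDerivAt_fst hf x t
  simpa [pdx, h.deriv] using h

lemma hasDerivAt_pdt (hf : ContDiff ℝ (⊤ : ℕ∞) (Function.uncurry f)) (x t : ℝ) :
    HasDerivAt (fun s => f x s) (pdt f x t) t := by
  have h := hasDerivAt_snd hf x t
  simpa [pdt, h.deriv] using h

lemma smooth_pdx (hf : ContDiff ℝ (⊤ : ℕ∞) (Function.uncurry f)) :
    ContDiff ℝ (⊤ : ℕ∞) (Function.uncurry (pdx f)) := by
  have he : Function.uncurry (pdx f) =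
      fun p : ℝ × ℝ => (fderiv ℝ (Function.uncurry f) p) (1, 0) := by
    funext p
    exact pdx_eq hf p.1 p.2
  rw [he]
  exact (hf.fderiv_right (by simp)).clm_apply contDiff_const

lemma smooth_pdt (hf : ContDiff ℝ (⊤ : ℕ∞) (Function.uncurry f)) :
    ContDiff ℝ (⊤ : ℕ∞) (Function.uncurry (pdt f)) := by
  have he : Function.uncurry (pdt f) =
      fun p : ℝ × ℝ => (fderiv ℝ (Function.uncurry f) p) (0, 1) := by
    funext p
    exact pdt_eq hf p.1 p.2
  rw [he]
  exact (hf.fderiv_right (by simp)).clm_apply contDiff_const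

lemma pdx_pdt_comm (hf : ContDiff ℝ (⊤ : ℕ∞) (Function.uncurry f)) (x t : ℝ) :
    pdx (pdt f) x t = pdt (pdx f) x t := by
  set F := Function.uncurry f with hF
  have hdF : ∀ p, HasFDerivAt F (fderiv ℝ F p) p := fun p =>
    (hf.differentiable (by simp) p).hasFDerivAt
  have hF1 : ContDiff ℝ (⊤ : ℕ∞) (fderiv ℝ F) := hf.fderiv_right (by simp)
  have hdF2 : HasFDerivAt (fderiv ℝ F) (fderiv ℝ (fderiv ℝ F) (x, t)) (x, t) :=
    (hF1.differentiable (by simp) (x, t)).hasFDerivAt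
  have hsymm := second_derivative_symmetric hdF hdF2 (1, 0) (0, 1)
  have h2x : HasDerivAt (fun y : ℝ => ((y, t) : ℝ × ℝ)) (1, 0) x :=
    (hasDerivAt_id x).prodMk (hasDerivAt_const x t)
  have h2t : HasDerivAt (fun s : ℝ => ((x, s) : ℝ × ℝ)) (0, 1) t :=
    (hasDerivAt_const t x).prodMk (hasDerivAt_id t)
  have hx1 : HasDerivAt (fun y => fderiv ℝ F (y, t))
      (fderiv ℝ (fderiv ℝ F) (x, t) (1, 0)) x := hdF2.comp_hasDerivAt x h2x
  have hx2 : HasDerivAt (fun y => fderiv ℝ F (y, t) (0, 1))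
      (fderiv ℝ (fderiv ℝ F) (x, t) (1, 0) (0, 1)) x := by
    simpa using hx1.clm_apply (hasDerivAt_const x ((0 : ℝ), (1 : ℝ)))
  have ht1 : HasDerivAt (fun s => fderiv ℝ F (x, s))
      (fderiv ℝ (fderiv ℝ F) (x, t) (0, 1)) t := hdF2.comp_hasDerivAt t h2t
  have ht2 : HasDerivAt (fun s => fderiv ℝ F (x, s) (1, 0))
      (fderiv ℝ (fderiv ℝ F) (x, t) (0, 1) (1, 0)) t := by
    simpa using ht1.clm_apply (hasDerivAt_const t ((1 : ℝ), (0 : ℝ)))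
  have e1 : pdx (pdt f) x t = fderiv ℝ (fderiv ℝ F) (x, t) (1, 0) (0, 1) := by
    have hfun : (fun y => pdt f y t) = fun y => fderiv ℝ F (y, t) (0, 1) :=
      funext fun y => pdt_eq hf y t
    show deriv (fun y => pdt f y t) x = _
    rw [hfun]
    exact hx2.deriv
  have e2 : pdt (pdx f) x t = fderiv ℝ (fderiv ℝ F) (x, t) (0, 1) (1, 0) := by
    have hfun : (fun s => pdx f x s) = fun s => fderiv ℝ F (x, s) (1, 0) :=
      funext fun s => pdx_eq hf x s
    show deriv (fun s => pdx f x s) t = _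
    rw [hfun]
    exact ht2.deriv
  rw [e1, e2, hsymm]

lemma contSlice (hf : Continuous (Function.uncurry f)) (t : ℝ) :
    Continuous fun x => f x t :=
  hf.comp (continuous_id.prodMk continuous_const)

lemma pdt_boundary (c : ℝ) (h : ∀ s, f c s = 0) (t : ℝ) : pdt f c t = 0 := by
  have hfun : (fun s => f c s) = fun _ => (0 : ℝ) := funext h
  simp [pdt, hfun]

end Helpers

section Helpers2

variable {f g h k : ℝ → ℝ → ℝ}

lemma hasDerivAt_integral_pdt (hf : ContDiff ℝ (⊤ : ℕ∞) (Function.uncurry f)) (l t0 : ℝ) :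
    HasDerivAt (fun t => ∫ x in (0:ℝ)..l, f x t)
      (∫ x in (0:ℝ)..l, pdt f x t0) t0 := by
  have hc : Continuous (Function.uncurry (pdt f)) := (smooth_pdt hf).continuous
  obtain ⟨C, hC⟩ := ((isCompact_uIcc (a := (0:ℝ)) (b := l)).prod
      (isCompact_Icc (a := t0 - 1) (b := t0 + 1))).exists_bound_of_continuousOn hc.continuousOn
  refine (intervalIntegral.hasDerivAt_integral_of_dominated_loc_of_deriv_le
      (F := fun t x => f x t) (F' := fun t x => pdt f x t) (bound := fun _ => C)
      (Metric.ball_mem_nhds t0 zero_lt_one) ?_ ?_ ?_ ?_ ?_ ?_).2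
  · exact Filter.Eventually.of_forall fun t =>
      ((contSlice hf.continuous t).aestronglyMeasurable)
  · exact (contSlice hf.continuous t0).intervalIntegrable 0 l
  · exact (contSlice hc t0).aestronglyMeasurable
  · refine MeasureTheory.ae_of_all _ fun x hx t ht => ?_
    have hx' : x ∈ Set.uIcc (0:ℝ) l := Set.uIoc_subset_uIcc hx
    have ht' : t ∈ Set.Icc (t0 - 1) (t0 + 1) := by
      rw [Real.ball_eq_Ioo] at ht
      exact Set.Ioo_subset_Icc_self ht
    exact hC (x, t) (Set.mk_mem_prod hx' ht')
  · exact intervalIntegrable_const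
  · exact MeasureTheory.ae_of_all _ fun x hx t ht => hasDerivAt_pdt hf x t

lemma sm_sq (hf : ContDiff ℝ (⊤ : ℕ∞) (Function.uncurry f)) :
    ContDiff ℝ (⊤ : ℕ∞) (Function.uncurry (fun x t => f x t ^ 2)) := hf.pow 2

lemma sm_mul (hf : ContDiff ℝ (⊤ : ℕ∞) (Function.uncurry f))
    (hg : ContDiff ℝ (⊤ : ℕ∞) (Function.uncurry g)) :
    ContDiff ℝ (⊤ : ℕ∞) (Function.uncurry (fun x t => f x t * g x t)) := hf.mul hg

lemma pdt_sq (hf : ContDiff ℝ (⊤ : ℕ∞) (Function.uncurry f)) (x t : ℝ) :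
    pdt (fun x t => f x t ^ 2) x t = 2 * f x t * pdt f x t := by
  have h := (hasDerivAt_pdt hf x t).pow 2
  have h2 := h.deriv
  simp only [pdt]
  rw [show (fun s => f x s ^ 2) = (fun s => f x s) ^ 2 from rfl, h2]
  simp [pdt]

lemma pdt_mul (hf : ContDiff ℝ (⊤ : ℕ∞) (Function.uncurry f))
    (hg : ContDiff ℝ (⊤ : ℕ∞) (Function.uncurry g)) (x t : ℝ) :
    pdt (fun x t => f x t * g x t) x t = pdt f x t * g x t + f x t * pdt g x t := by
  have h := ((hasDerivAt_pdt hf x t).mul (hasDerivAt_pdt hg x t)).deriv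
  simp only [pdt]
  rw [show (fun s => f x s * g x s) = (fun s => f x s) * (fun s => g x s) from rfl, h]
  simp [pdt]

/-- Integration by parts with vanishing boundary terms for the first factor. -/
lemma ibp (hf : ContDiff ℝ (⊤ : ℕ∞) (Function.uncurry f)) (hg : ContDiff ℝ (⊤ : ℕ∞) (Function.uncurry g))
    (l t : ℝ) (h0 : f 0 t = 0) (hl : f l t = 0) :
    ∫ x in (0:ℝ)..l, f x t * pdx g x t = -∫ x in (0:ℝ)..l, pdx f x t * g x t := by
  have key : (∫ x in (0:ℝ)..l, f x t * pdx g x t) =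
      f l t * g l t - f 0 t * g 0 t - ∫ x in (0:ℝ)..l, pdx f x t * g x t :=
    intervalIntegral.integral_mul_deriv_eq_deriv_mul
      (fun x _ => hasDerivAt_pdx hf x t) (fun x _ => hasDerivAt_pdx hg x t)
      ((contSlice (smooth_pdx hf).continuous t).intervalIntegrable 0 l)
      ((contSlice (smooth_pdx hg).continuous t).intervalIntegrable 0 l)
  rw [key, h0, hl]
  ring

lemma int2 {f g : ℝ → ℝ} (a b c1 c2 : ℝ) (hf : Continuous f) (hg : Continuous g) :
    ∫ x in a..b, (c1 * f x + c2 * g x) =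
      c1 * (∫ x in a..b, f x) + c2 * (∫ x in a..b, g x) := by
  rw [intervalIntegral.integral_add ((continuous_const.fun_mul hf).intervalIntegrable a b)
    ((continuous_const.fun_mul hg).intervalIntegrable a b),
    intervalIntegral.integral_const_mul, intervalIntegral.integral_const_mul]

lemma int3 {f g h : ℝ → ℝ} (a b c1 c2 c3 : ℝ) (hf : Continuous f) (hg : Continuous g)
    (hh : Continuous h) :
    ∫ x in a..b, (c1 * f x + c2 * g x + c3 * h x) =
      c1 * (∫ x in a..b, f x) + c2 * (∫ x in a..b, g x) + c3 * (∫ x in a..b, h x) := by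
  rw [intervalIntegral.integral_add (((continuous_const.fun_mul hf).fun_add
    (continuous_const.fun_mul hg)).intervalIntegrable a b)
    ((continuous_const.fun_mul hh).intervalIntegrable a b), int2 a b c1 c2 hf hg,
    intervalIntegral.integral_const_mul]

lemma int4 {f g h k : ℝ → ℝ} (a b c1 c2 c3 c4 : ℝ) (hf : Continuous f) (hg : Continuous g)
    (hh : Continuous h) (hk : Continuous k) :
    ∫ x in a..b, (c1 * f x + c2 * g x + c3 * h x + c4 * k x) =
      c1 * (∫ x in a..b, f x) + c2 * (∫ x in a..b, g x) + c3 * (∫ x in a..b, h x)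
        + c4 * (∫ x in a..b, k x) := by
  rw [intervalIntegral.integral_add ((((continuous_const.fun_mul hf).fun_add
    (continuous_const.fun_mul hg)).fun_add (continuous_const.fun_mul hh)).intervalIntegrable a b)
    ((continuous_const.fun_mul hk).intervalIntegrable a b),
    int3 a b c1 c2 c3 hf hg hh, intervalIntegral.integral_const_mul]

lemma int5 {f g h k m : ℝ → ℝ} (a b c1 c2 c3 c4 c5 : ℝ) (hf : Continuous f) (hg : Continuous g)
    (hh : Continuous h) (hk : Continuous k) (hm : Continuous m) :
    ∫ x in a..b, (c1 * f x + c2 * g x + c3 * h x + c4 * k x + c5 * m x) =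
      c1 * (∫ x in a..b, f x) + c2 * (∫ x in a..b, g x) + c3 * (∫ x in a..b, h x)
        + c4 * (∫ x in a..b, k x) + c5 * (∫ x in a..b, m x) := by
  rw [intervalIntegral.integral_add (((((continuous_const.fun_mul hf).fun_add
    (continuous_const.fun_mul hg)).fun_add (continuous_const.fun_mul hh)).fun_add
    (continuous_const.fun_mul hk)).intervalIntegrable a b)
    ((continuous_const.fun_mul hm).intervalIntegrable a b),
    int4 a b c1 c2 c3 c4 hf hg hh hk, intervalIntegral.integral_const_mul]

end Helpers2

theorem stmt_2 (l ρ mu b J δ xi d α κ k : ℝ)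
    (hl : 0 < l) (hρ : 0 < ρ) (hmu : 0 < mu) (hb : 0 < b) (hJ : 0 < J)
    (hδ : 0 < δ) (hxi : 0 < xi) (hd : 0 < d) (hα : 0 < α) (hκ : 0 < κ) (hk : 0 < k)
    (hcond : mu * xi - b ^ 2 > 0)
    (u φ w : ℝ → ℝ → ℝ)
    (hu : ContDiff ℝ (⊤ : ℕ∞) (Function.uncurry u)) (hφ : ContDiff ℝ (⊤ : ℕ∞) (Function.uncurry φ))
    (hw : ContDiff ℝ (⊤ : ℕ∞) (Function.uncurry w))
    (heq1 : ∀ x t, ρ * pdt (pdt u) x t = mu * pdx (pdx u) x t + b * pdx φ x t)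
    (heq2 : ∀ x t, -J * pdx (pdt (pdt u)) x t - δ * pdx (pdx φ) x t
        + b * pdx u x t + xi * φ x t + d * pdx w x t = 0)
    (heq3 : ∀ x t, α * pdt w x t - κ * pdx (pdx w) x t + d * pdx (pdt φ) x t + k * w x t = 0)
    (hbc : ∀ t, u 0 t = 0 ∧ u l t = 0 ∧ φ 0 t = 0 ∧ φ l t = 0 ∧ w 0 t = 0 ∧ w l t = 0)
    (E : ℝ → ℝ)
    (hE : ∀ t, E t = (1/2) * (ρ * (∫ x in (0:ℝ)..l, (pdt u x t) ^ 2)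
        + mu * (∫ x in (0:ℝ)..l, (pdx u x t) ^ 2)
        + δ * (∫ x in (0:ℝ)..l, (pdx φ x t) ^ 2)
        + xi * (∫ x in (0:ℝ)..l, (φ x t) ^ 2)
        + (J * ρ / b) * (∫ x in (0:ℝ)..l, (pdt (pdt u) x t) ^ 2)
        + (J * mu / b) * (∫ x in (0:ℝ)..l, (pdx (pdt u) x t) ^ 2)
        + α * (∫ x in (0:ℝ)..l, (w x t) ^ 2)
        + 2 * b * (∫ x in (0:ℝ)..l, pdx u x t * φ x t))) :
    (∀ t, HasDerivAt E
        (-κ * (∫ x in (0:ℝ)..l, (pdx w x t) ^ 2) - k * (∫ x in (0:ℝ)..l, (w x t) ^ 2)) t) ∧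
    (∀ s t : ℝ, s ≤ t → E t ≤ E s) := by
  have hbne : b ≠ 0 := ne_of_gt hb
  -- smoothness package
  have hut : ContDiff ℝ (⊤ : ℕ∞) (Function.uncurry (pdt u)) := smooth_pdt hu
  have hux : ContDiff ℝ (⊤ : ℕ∞) (Function.uncurry (pdx u)) := smooth_pdx hu
  have hutt : ContDiff ℝ (⊤ : ℕ∞) (Function.uncurry (pdt (pdt u))) := smooth_pdt hut
  have huxt : ContDiff ℝ (⊤ : ℕ∞) (Function.uncurry (pdx (pdt u))) := smooth_pdx hut
  have huxx : ContDiff ℝ (⊤ : ℕ∞) (Function.uncurry (pdx (pdx u))) := smooth_pdx hux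
  have huttx : ContDiff ℝ (⊤ : ℕ∞) (Function.uncurry (pdx (pdt (pdt u)))) := smooth_pdx hutt
  have hφx : ContDiff ℝ (⊤ : ℕ∞) (Function.uncurry (pdx φ)) := smooth_pdx hφ
  have hφt : ContDiff ℝ (⊤ : ℕ∞) (Function.uncurry (pdt φ)) := smooth_pdt hφ
  have hφtx : ContDiff ℝ (⊤ : ℕ∞) (Function.uncurry (pdx (pdt φ))) := smooth_pdx hφt
  have hφxx : ContDiff ℝ (⊤ : ℕ∞) (Function.uncurry (pdx (pdx φ))) := smooth_pdx hφx
  have hwt : ContDiff ℝ (⊤ : ℕ∞) (Function.uncurry (pdt w)) := smooth_pdt hw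
  have hwx : ContDiff ℝ (⊤ : ℕ∞) (Function.uncurry (pdx w)) := smooth_pdx hw
  -- boundary values
  have hu0 : ∀ s, u 0 s = 0 := fun s => (hbc s).1
  have hul : ∀ s, u l s = 0 := fun s => (hbc s).2.1
  have hφ0 : ∀ s, φ 0 s = 0 := fun s => (hbc s).2.2.1
  have hφl : ∀ s, φ l s = 0 := fun s => (hbc s).2.2.2.1
  have hw0 : ∀ s, w 0 s = 0 := fun s => (hbc s).2.2.2.2.1
  have hwl : ∀ s, w l s = 0 := fun s => (hbc s).2.2.2.2.2
  have hut0 : ∀ s, pdt u 0 s = 0 := fun s => pdt_boundary 0 hu0 s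
  have hutl : ∀ s, pdt u l s = 0 := fun s => pdt_boundary l hul s
  have hutt0 : ∀ s, pdt (pdt u) 0 s = 0 := fun s => pdt_boundary 0 hut0 s
  have huttl : ∀ s, pdt (pdt u) l s = 0 := fun s => pdt_boundary l hutl s
  have hφt0 : ∀ s, pdt φ 0 s = 0 := fun s => pdt_boundary 0 hφ0 s
  have hφtl : ∀ s, pdt φ l s = 0 := fun s => pdt_boundary l hφl s
  have hswapu : pdt (pdx u) = pdx (pdt u) :=
    funext fun a => funext fun s => (pdx_pdt_comm hu a s).symm
  have key : ∀ t, HasDerivAt E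
      (-κ * (∫ x in (0:ℝ)..l, (pdx w x t) ^ 2) - k * (∫ x in (0:ℝ)..l, (w x t) ^ 2)) t := by
    intro t
    have cs : ∀ {f₀ : ℝ → ℝ → ℝ}, ContDiff ℝ (⊤ : ℕ∞) (Function.uncurry f₀) →
        Continuous fun x => f₀ x t := fun hf₀ => contSlice hf₀.continuous t
    -- derivatives of the eight integrals
    have d1 : HasDerivAt (fun t => ∫ x in (0:ℝ)..l, (pdt u x t) ^ 2)
        (2 * ∫ x in (0:ℝ)..l, pdt u x t * pdt (pdt u) x t) t := by
      have h := hasDerivAt_integral_pdt (sm_sq hut) l t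
      have hc : (∫ x in (0:ℝ)..l, pdt (fun x t => (pdt u x t) ^ 2) x t)
          = 2 * ∫ x in (0:ℝ)..l, pdt u x t * pdt (pdt u) x t := by
        rw [← intervalIntegral.integral_const_mul]
        exact intervalIntegral.integral_congr fun x _ => by rw [pdt_sq hut]; ring
      rwa [hc] at h
    have d2 : HasDerivAt (fun t => ∫ x in (0:ℝ)..l, (pdx u x t) ^ 2)
        (2 * ∫ x in (0:ℝ)..l, pdx (pdt u) x t * pdx u x t) t := by
      have h := hasDerivAt_integral_pdt (sm_sq hux) l t
      have hc : (∫ x in (0:ℝ)..l, pdt (fun x t => (pdx u x t) ^ 2) x t)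
          = 2 * ∫ x in (0:ℝ)..l, pdx (pdt u) x t * pdx u x t := by
        rw [← intervalIntegral.integral_const_mul]
        exact intervalIntegral.integral_congr fun x _ => by
          rw [pdt_sq hux, ← pdx_pdt_comm hu]; ring
      rwa [hc] at h
    have d3 : HasDerivAt (fun t => ∫ x in (0:ℝ)..l, (pdx φ x t) ^ 2)
        (2 * ∫ x in (0:ℝ)..l, pdx (pdt φ) x t * pdx φ x t) t := by
      have h := hasDerivAt_integral_pdt (sm_sq hφx) l t
      have hc : (∫ x in (0:ℝ)..l, pdt (fun x t => (pdx φ x t) ^ 2) x t)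
          = 2 * ∫ x in (0:ℝ)..l, pdx (pdt φ) x t * pdx φ x t := by
        rw [← intervalIntegral.integral_const_mul]
        exact intervalIntegral.integral_congr fun x _ => by
          rw [pdt_sq hφx, ← pdx_pdt_comm hφ]; ring
      rwa [hc] at h
    have d4 : HasDerivAt (fun t => ∫ x in (0:ℝ)..l, (φ x t) ^ 2)
        (2 * ∫ x in (0:ℝ)..l, φ x t * pdt φ x t) t := by
      have h := hasDerivAt_integral_pdt (sm_sq hφ) l t
      have hc : (∫ x in (0:ℝ)..l, pdt (fun x t => (φ x t) ^ 2) x t)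
          = 2 * ∫ x in (0:ℝ)..l, φ x t * pdt φ x t := by
        rw [← intervalIntegral.integral_const_mul]
        exact intervalIntegral.integral_congr fun x _ => by rw [pdt_sq hφ]; ring
      rwa [hc] at h
    have d5 : HasDerivAt (fun t => ∫ x in (0:ℝ)..l, (pdt (pdt u) x t) ^ 2)
        (2 * ∫ x in (0:ℝ)..l, pdt (pdt u) x t * pdt (pdt (pdt u)) x t) t := by
      have h := hasDerivAt_integral_pdt (sm_sq hutt) l t
      have hc : (∫ x in (0:ℝ)..l, pdt (fun x t => (pdt (pdt u) x t) ^ 2) x t)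
          = 2 * ∫ x in (0:ℝ)..l, pdt (pdt u) x t * pdt (pdt (pdt u)) x t := by
        rw [← intervalIntegral.integral_const_mul]
        exact intervalIntegral.integral_congr fun x _ => by rw [pdt_sq hutt]; ring
      rwa [hc] at h
    have d6 : HasDerivAt (fun t => ∫ x in (0:ℝ)..l, (pdx (pdt u) x t) ^ 2)
        (2 * ∫ x in (0:ℝ)..l, pdx (pdt (pdt u)) x t * pdx (pdt u) x t) t := by
      have h := hasDerivAt_integral_pdt (sm_sq huxt) l t
      have hc : (∫ x in (0:ℝ)..l, pdt (fun x t => (pdx (pdt u) x t) ^ 2) x t)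
          = 2 * ∫ x in (0:ℝ)..l, pdx (pdt (pdt u)) x t * pdx (pdt u) x t := by
        rw [← intervalIntegral.integral_const_mul]
        exact intervalIntegral.integral_congr fun x _ => by
          rw [pdt_sq huxt, ← pdx_pdt_comm hut]; ring
      rwa [hc] at h
    have d7 : HasDerivAt (fun t => ∫ x in (0:ℝ)..l, (w x t) ^ 2)
        (2 * ∫ x in (0:ℝ)..l, w x t * pdt w x t) t := by
      have h := hasDerivAt_integral_pdt (sm_sq hw) l t
      have hc : (∫ x in (0:ℝ)..l, pdt (fun x t => (w x t) ^ 2) x t)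
          = 2 * ∫ x in (0:ℝ)..l, w x t * pdt w x t := by
        rw [← intervalIntegral.integral_const_mul]
        exact intervalIntegral.integral_congr fun x _ => by rw [pdt_sq hw]; ring
      rwa [hc] at h
    have d8 : HasDerivAt (fun t => ∫ x in (0:ℝ)..l, pdx u x t * φ x t)
        ((∫ x in (0:ℝ)..l, pdx (pdt u) x t * φ x t)
          + ∫ x in (0:ℝ)..l, pdx u x t * pdt φ x t) t := by
      have h := hasDerivAt_integral_pdt (sm_mul hux hφ) l t
      have hc : (∫ x in (0:ℝ)..l, pdt (fun x t => pdx u x t * φ x t) x t)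
          = (∫ x in (0:ℝ)..l, pdx (pdt u) x t * φ x t)
            + ∫ x in (0:ℝ)..l, pdx u x t * pdt φ x t := by
        rw [← intervalIntegral.integral_add
          (((cs huxt).fun_mul (cs hφ)).intervalIntegrable 0 l)
          (((cs hux).fun_mul (cs hφt)).intervalIntegrable 0 l)]
        exact intervalIntegral.integral_congr fun x _ => by
          rw [pdt_mul hux hφ, ← pdx_pdt_comm hu]
      rwa [hc] at h
    -- integration by parts facts
    have ibp1 := ibp hut hux l t (hut0 t) (hutl t)
    have ibp2 := ibp hut hφ l t (hut0 t) (hutl t)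
    have ibp3 := ibp hutt huxt l t (hutt0 t) (huttl t)
    have ibp4 := ibp hutt hφt l t (hutt0 t) (huttl t)
    have ibp5 := ibp hφt hφx l t (hφt0 t) (hφtl t)
    have ibp6 := ibp hw hφt l t (hw0 t) (hwl t)
    have ibp7 := ibp hw hwx l t (hw0 t) (hwl t)
    -- identity 1 : from heq1 tested against pdt u
    have e1 : ρ * (∫ x in (0:ℝ)..l, pdt u x t * pdt (pdt u) x t)
        = mu * (∫ x in (0:ℝ)..l, pdt u x t * pdx (pdx u) x t)
          + b * (∫ x in (0:ℝ)..l, pdt u x t * pdx φ x t) := by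
      rw [← intervalIntegral.integral_const_mul,
        ← int2 0 l mu b ((cs hut).fun_mul (cs huxx)) ((cs hut).fun_mul (cs hφx))]
      exact intervalIntegral.integral_congr fun x _ => by
        linear_combination pdt u x t * heq1 x t
    rw [ibp1, ibp2] at e1
    -- time-differentiated equation 1
    have heq1t : ∀ x, ρ * pdt (pdt (pdt u)) x t
        = mu * pdx (pdx (pdt u)) x t + b * pdx (pdt φ) x t := by
      intro x
      have hL : HasDerivAt (fun s => ρ * pdt (pdt u) x s) (ρ * pdt (pdt (pdt u)) x t) t :=
        (hasDerivAt_pdt hutt x t).const_mul ρ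
      have hR : HasDerivAt (fun s => mu * pdx (pdx u) x s + b * pdx φ x s)
          (mu * pdt (pdx (pdx u)) x t + b * pdt (pdx φ) x t) t :=
        ((hasDerivAt_pdt huxx x t).const_mul mu).add ((hasDerivAt_pdt hφx x t).const_mul b)
      have hRL : HasDerivAt (fun s => ρ * pdt (pdt u) x s)
          (mu * pdt (pdx (pdx u)) x t + b * pdt (pdx φ) x t) t :=
        hR.congr_of_eventuallyEq (Filter.Eventually.of_forall fun s => heq1 x s)
      have huniq := hL.unique hRL
      rw [huniq, ← pdx_pdt_comm hux x t, hswapu, ← pdx_pdt_comm hφ x t]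
    -- identity 2 : from differentiated heq1 tested against pdt (pdt u)
    have e2 : ρ * (∫ x in (0:ℝ)..l, pdt (pdt u) x t * pdt (pdt (pdt u)) x t)
        = mu * (∫ x in (0:ℝ)..l, pdt (pdt u) x t * pdx (pdx (pdt u)) x t)
          + b * (∫ x in (0:ℝ)..l, pdt (pdt u) x t * pdx (pdt φ) x t) := by
      rw [← intervalIntegral.integral_const_mul,
        ← int2 0 l mu b ((cs hutt).fun_mul (cs (smooth_pdx huxt))) ((cs hutt).fun_mul (cs hφtx))]
      exact intervalIntegral.integral_congr fun x _ => by
        linear_combination pdt (pdt u) x t * heq1t x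
    rw [ibp3, ibp4] at e2
    -- identity 3 : heq2 tested against pdt φ
    have e3 : (-J) * (∫ x in (0:ℝ)..l, pdx (pdt (pdt u)) x t * pdt φ x t)
        + (-δ) * (∫ x in (0:ℝ)..l, pdt φ x t * pdx (pdx φ) x t)
        + b * (∫ x in (0:ℝ)..l, pdx u x t * pdt φ x t)
        + xi * (∫ x in (0:ℝ)..l, φ x t * pdt φ x t)
        + d * (∫ x in (0:ℝ)..l, pdx w x t * pdt φ x t) = 0 := by
      rw [← int5 0 l (-J) (-δ) b xi d ((cs huttx).fun_mul (cs hφt)) ((cs hφt).fun_mul (cs hφxx))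
        ((cs hux).fun_mul (cs hφt)) ((cs hφ).fun_mul (cs hφt)) ((cs hwx).fun_mul (cs hφt))]
      have hpt : Set.EqOn
          (fun x => (-J) * (pdx (pdt (pdt u)) x t * pdt φ x t)
            + (-δ) * (pdt φ x t * pdx (pdx φ) x t) + b * (pdx u x t * pdt φ x t)
            + xi * (φ x t * pdt φ x t) + d * (pdx w x t * pdt φ x t))
          (fun _ => (0:ℝ)) (Set.uIcc 0 l) := fun x _ => by
        linear_combination pdt φ x t * heq2 x t
      rw [intervalIntegral.integral_congr hpt, intervalIntegral.integral_zero]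
    rw [ibp5] at e3
    -- identity 4 : heq3 tested against w
    have e4 : α * (∫ x in (0:ℝ)..l, w x t * pdt w x t)
        + (-κ) * (∫ x in (0:ℝ)..l, w x t * pdx (pdx w) x t)
        + d * (∫ x in (0:ℝ)..l, w x t * pdx (pdt φ) x t)
        + k * (∫ x in (0:ℝ)..l, w x t * w x t) = 0 := by
      rw [← int4 0 l α (-κ) d k ((cs hw).fun_mul (cs hwt)) ((cs hw).fun_mul (cs (smooth_pdx hwx)))
        ((cs hw).fun_mul (cs hφtx)) ((cs hw).fun_mul (cs hw))]
      have hpt : Set.EqOn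
          (fun x => α * (w x t * pdt w x t) + (-κ) * (w x t * pdx (pdx w) x t)
            + d * (w x t * pdx (pdt φ) x t) + k * (w x t * w x t))
          (fun _ => (0:ℝ)) (Set.uIcc 0 l) := fun x _ => by
        linear_combination w x t * heq3 x t
      rw [intervalIntegral.integral_congr hpt, intervalIntegral.integral_zero]
    rw [ibp6, ibp7] at e4
    -- assemble derivative of E
    have hsum : HasDerivAt (fun t => ρ * (∫ x in (0:ℝ)..l, (pdt u x t) ^ 2)
        + mu * (∫ x in (0:ℝ)..l, (pdx u x t) ^ 2)
        + δ * (∫ x in (0:ℝ)..l, (pdx φ x t) ^ 2)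
        + xi * (∫ x in (0:ℝ)..l, (φ x t) ^ 2)
        + (J * ρ / b) * (∫ x in (0:ℝ)..l, (pdt (pdt u) x t) ^ 2)
        + (J * mu / b) * (∫ x in (0:ℝ)..l, (pdx (pdt u) x t) ^ 2)
        + α * (∫ x in (0:ℝ)..l, (w x t) ^ 2)
        + 2 * b * (∫ x in (0:ℝ)..l, pdx u x t * φ x t))
        (ρ * (2 * ∫ x in (0:ℝ)..l, pdt u x t * pdt (pdt u) x t)
          + mu * (2 * ∫ x in (0:ℝ)..l, pdx (pdt u) x t * pdx u x t)
          + δ * (2 * ∫ x in (0:ℝ)..l, pdx (pdt φ) x t * pdx φ x t)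
          + xi * (2 * ∫ x in (0:ℝ)..l, φ x t * pdt φ x t)
          + (J * ρ / b) * (2 * ∫ x in (0:ℝ)..l, pdt (pdt u) x t * pdt (pdt (pdt u)) x t)
          + (J * mu / b) * (2 * ∫ x in (0:ℝ)..l, pdx (pdt (pdt u)) x t * pdx (pdt u) x t)
          + α * (2 * ∫ x in (0:ℝ)..l, w x t * pdt w x t)
          + 2 * b * ((∫ x in (0:ℝ)..l, pdx (pdt u) x t * φ x t)
            + ∫ x in (0:ℝ)..l, pdx u x t * pdt φ x t)) t :=
      (((((((d1.const_mul ρ).add (d2.const_mul mu)).add (d3.const_mul δ)).add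
        (d4.const_mul xi)).add (d5.const_mul (J * ρ / b))).add
        (d6.const_mul (J * mu / b))).add (d7.const_mul α)).add (d8.const_mul (2 * b))
    have hE' : HasDerivAt E ((1/2) * (ρ * (2 * ∫ x in (0:ℝ)..l, pdt u x t * pdt (pdt u) x t)
          + mu * (2 * ∫ x in (0:ℝ)..l, pdx (pdt u) x t * pdx u x t)
          + δ * (2 * ∫ x in (0:ℝ)..l, pdx (pdt φ) x t * pdx φ x t)
          + xi * (2 * ∫ x in (0:ℝ)..l, φ x t * pdt φ x t)
          + (J * ρ / b) * (2 * ∫ x in (0:ℝ)..l, pdt (pdt u) x t * pdt (pdt (pdt u)) x t)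
          + (J * mu / b) * (2 * ∫ x in (0:ℝ)..l, pdx (pdt (pdt u)) x t * pdx (pdt u) x t)
          + α * (2 * ∫ x in (0:ℝ)..l, w x t * pdt w x t)
          + 2 * b * ((∫ x in (0:ℝ)..l, pdx (pdt u) x t * φ x t)
            + ∫ x in (0:ℝ)..l, pdx u x t * pdt φ x t))) t := by
      have hEfun : E = fun t => (1/2) * (ρ * (∫ x in (0:ℝ)..l, (pdt u x t) ^ 2)
          + mu * (∫ x in (0:ℝ)..l, (pdx u x t) ^ 2)
          + δ * (∫ x in (0:ℝ)..l, (pdx φ x t) ^ 2)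
          + xi * (∫ x in (0:ℝ)..l, (φ x t) ^ 2)
          + (J * ρ / b) * (∫ x in (0:ℝ)..l, (pdt (pdt u) x t) ^ 2)
          + (J * mu / b) * (∫ x in (0:ℝ)..l, (pdx (pdt u) x t) ^ 2)
          + α * (∫ x in (0:ℝ)..l, (w x t) ^ 2)
          + 2 * b * (∫ x in (0:ℝ)..l, pdx u x t * φ x t)) := funext hE
      rw [hEfun]
      exact hsum.const_mul (1/2)
    -- rewrite the squares in the target derivative
    have hs1 : (∫ x in (0:ℝ)..l, (pdx w x t) ^ 2)
        = ∫ x in (0:ℝ)..l, pdx w x t * pdx w x t :=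
      intervalIntegral.integral_congr fun x _ => pow_two _
    have hs2 : (∫ x in (0:ℝ)..l, (w x t) ^ 2) = ∫ x in (0:ℝ)..l, w x t * w x t :=
      intervalIntegral.integral_congr fun x _ => pow_two _
    have hbb : b * b⁻¹ = 1 := mul_inv_cancel₀ hbne
    have hval : -κ * (∫ x in (0:ℝ)..l, (pdx w x t) ^ 2)
        - k * (∫ x in (0:ℝ)..l, (w x t) ^ 2)
        = (1/2) * (ρ * (2 * ∫ x in (0:ℝ)..l, pdt u x t * pdt (pdt u) x t)
          + mu * (2 * ∫ x in (0:ℝ)..l, pdx (pdt u) x t * pdx u x t)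
          + δ * (2 * ∫ x in (0:ℝ)..l, pdx (pdt φ) x t * pdx φ x t)
          + xi * (2 * ∫ x in (0:ℝ)..l, φ x t * pdt φ x t)
          + (J * ρ / b) * (2 * ∫ x in (0:ℝ)..l, pdt (pdt u) x t * pdt (pdt (pdt u)) x t)
          + (J * mu / b) * (2 * ∫ x in (0:ℝ)..l, pdx (pdt (pdt u)) x t * pdx (pdt u) x t)
          + α * (2 * ∫ x in (0:ℝ)..l, w x t * pdt w x t)
          + 2 * b * ((∫ x in (0:ℝ)..l, pdx (pdt u) x t * φ x t)
            + ∫ x in (0:ℝ)..l, pdx u x t * pdt φ x t)) := by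
      rw [hs1, hs2]
      linear_combination (-1 : ℝ) * e1 - (J * b⁻¹) * e2 - e3 - e4
        + (J * (∫ x in (0:ℝ)..l, pdx (pdt (pdt u)) x t * pdt φ x t)) * hbb
    rw [hval]
    exact hE'
  refine ⟨key, fun s t hst => ?_⟩
  have mono : Antitone E := by
    apply antitone_of_hasDerivAt_nonpos key
    intro τ
    show -κ * (∫ x in (0:ℝ)..l, (pdx w x τ) ^ 2) - k * (∫ x in (0:ℝ)..l, (w x τ) ^ 2) ≤ (0:ℝ)
    have h1 : 0 ≤ ∫ x in (0:ℝ)..l, (pdx w x τ) ^ 2 :=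
      intervalIntegral.integral_nonneg hl.le fun x _ => sq_nonneg _
    have h2 : 0 ≤ ∫ x in (0:ℝ)..l, (w x τ) ^ 2 :=
      intervalIntegral.integral_nonneg hl.le fun x _ => sq_nonneg _
    nlinarith [mul_nonneg hκ.le h1, mul_nonneg hk.le h2]
  exact mono hst
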